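/- Let v be a smooth function of (t₁,t₂,t₃,y₁,y₂,y₃) with v_{y₁} ≠ 0, and suppose on the level set x = const one eliminates ∂_x from the Lax triple ∂_{t_k}Ψ = (λ∂_{y_k} - v_{y_k}∂_x)Ψ (k=1,2,3) to obtain the pair (∂_{t₂} - λ∂_{y₂})Ψ = (v_{y₂}/v_{y₁})(∂_{t₁} - λ∂_{y₁})Ψ and (∂_{t₃} - λ∂_{y₃})Ψ = (v_{y₃}/v_{y₁})(∂_{t₁} - λ∂_{y₁})Ψ. Then commutativity of this pair of vector fields for all λ is equivalent to the six-dimensional second-order quasilinear equation v_{y₃}(v_{y₂t₁} - v_{y₁t₂}) + v_{y₁}(v_{y₃t₂} - v_{y₂t₃}) + v_{y₂}(v_{y₁t₃} - v_{y₃t₁}) = 0. -/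

import Mathlib

/- STATEMENT 8: With v_{y₁} ≠ 0, the pair of vector fields obtained on x = const by
eliminating ∂_x from the Lax triple,
(∂_{t₂} - λ∂_{y₂}) - (v_{y₂}/v_{y₁})(∂_{t₁} - λ∂_{y₁}) and
(∂_{t₃} - λ∂_{y₃}) - (v_{y₃}/v_{y₁})(∂_{t₁} - λ∂_{y₁}),
commutes for all λ iff
v_{y₃}(v_{y₂t₁} - v_{y₁t₂}) + v_{y₁}(v_{y₃t₂} - v_{y₂t₃}) + v_{y₂}(v_{y₁t₃} - v_{y₃t₁}) = 0.
Coordinates on ℝ⁶: 0 = t₁, 1 = t₂, 2 = t₃, 3 = y₁, 4 = y₂, 5 = y₃. -/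

noncomputable def pd {n : ℕ} (i : Fin n) (f : (Fin n → ℝ) → ℝ) : (Fin n → ℝ) → ℝ :=
  fun x => fderiv ℝ f x (Pi.single i 1)

/-- (∂_{t₂} - λ∂_{y₂})Ψ - (v_{y₂}/v_{y₁})(∂_{t₁} - λ∂_{y₁})Ψ -/
noncomputable def V₂ (v : (Fin 6 → ℝ) → ℝ) (lam : ℝ) (f : (Fin 6 → ℝ) → ℝ) :
    (Fin 6 → ℝ) → ℝ :=
  fun p => pd 1 f p - lam * pd 4 f p - (pd 4 v p / pd 3 v p) * (pd 0 f p - lam * pd 3 f p)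

/-- (∂_{t₃} - λ∂_{y₃})Ψ - (v_{y₃}/v_{y₁})(∂_{t₁} - λ∂_{y₁})Ψ -/
noncomputable def V₃ (v : (Fin 6 → ℝ) → ℝ) (lam : ℝ) (f : (Fin 6 → ℝ) → ℝ) :
    (Fin 6 → ℝ) → ℝ :=
  fun p => pd 2 f p - lam * pd 5 f p - (pd 5 v p / pd 3 v p) * (pd 0 f p - lam * pd 3 f p)

private lemma pd_smooth {f : (Fin 6 → ℝ) → ℝ} (hf : ContDiff ℝ (⊤ : ℕ∞) f) (i : Fin 6) :
    ContDiff ℝ (⊤ : ℕ∞) (pd i f) :=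
  (hf.fderiv_right (by simp)).clm_apply contDiff_const

private lemma pd_mul {f g : (Fin 6 → ℝ) → ℝ} {p : Fin 6 → ℝ} (hf : DifferentiableAt ℝ f p)
    (hg : DifferentiableAt ℝ g p) (i : Fin 6) :
    pd i (fun x => f x * g x) p = f p * pd i g p + g p * pd i f p := by
  simp [pd, fderiv_fun_mul hf hg]

private lemma pd_div {g h : (Fin 6 → ℝ) → ℝ} (i : Fin 6) (hg : ContDiff ℝ (⊤ : ℕ∞) g)
    (hh : ContDiff ℝ (⊤ : ℕ∞) h) (h0 : ∀ x, h x ≠ 0) (p : Fin 6 → ℝ) :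
    pd i (fun x => g x / h x) p = (pd i g p - (g p / h p) * pd i h p) / h p := by
  have hq : ContDiff ℝ (⊤ : ℕ∞) (fun x => g x / h x) := hg.div hh h0
  have key : pd i g p = (g p / h p) * pd i h p + h p * pd i (fun x => g x / h x) p := by
    have hgeq : g = fun x => (g x / h x) * h x := funext fun x => (div_mul_cancel₀ _ (h0 x)).symm
    conv_lhs => rw [hgeq]
    exact pd_mul (hq.differentiable (by simp) p) (hh.differentiable (by simp) p) i
  rw [eq_div_iff (h0 p), key]; ring

private lemma pd_pd {f : (Fin 6 → ℝ) → ℝ} (hf : ContDiff ℝ (⊤ : ℕ∞) f) (i j : Fin 6) (p : Fin 6 → ℝ) :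
    pd i (pd j f) p = fderiv ℝ (fderiv ℝ f) p (Pi.single i 1) (Pi.single j 1) := by
  have h2 : HasFDerivAt (fderiv ℝ f) (fderiv ℝ (fderiv ℝ f) p) p :=
    ((hf.fderiv_right (m := 1) (WithTop.coe_le_coe.mpr le_top)).differentiable one_ne_zero p).hasFDerivAt
  have h3 : HasFDerivAt (pd j f)
      ((fderiv ℝ f p).comp (0 : (Fin 6 → ℝ) →L[ℝ] (Fin 6 → ℝ))
        + (fderiv ℝ (fderiv ℝ f) p).flip (Pi.single j 1)) p :=
    h2.clm_apply (hasFDerivAt_const _ _)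
  show fderiv ℝ (pd j f) p (Pi.single i 1) = _
  rw [h3.fderiv]
  simp [ContinuousLinearMap.flip_apply]

private lemma pd_comm {f : (Fin 6 → ℝ) → ℝ} (hf : ContDiff ℝ (⊤ : ℕ∞) f) (i j : Fin 6)
    (p : Fin 6 → ℝ) : pd i (pd j f) p = pd j (pd i f) p := by
  rw [pd_pd hf, pd_pd hf]
  exact second_derivative_symmetric (fun y => ((hf.differentiable (by simp)) y).hasFDerivAt)
    ((hf.fderiv_right (m := 1) (WithTop.coe_le_coe.mpr le_top)).differentiable one_ne_zero p).hasFDerivAt _ _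

private lemma V₂_apply (v : (Fin 6 → ℝ) → ℝ) (lam : ℝ) (g : (Fin 6 → ℝ) → ℝ) (p : Fin 6 → ℝ) :
    V₂ v lam g p = fderiv ℝ g p
      (((Pi.single 1 1 : Fin 6 → ℝ) - lam • (Pi.single 4 1 : Fin 6 → ℝ))
        - (pd 4 v p / pd 3 v p) • ((Pi.single 0 1 : Fin 6 → ℝ) - lam • (Pi.single 3 1 : Fin 6 → ℝ))) := by
  simp only [V₂, pd, map_sub, map_smul, smul_eq_mul]

private lemma V₃_apply (v : (Fin 6 → ℝ) → ℝ) (lam : ℝ) (g : (Fin 6 → ℝ) → ℝ) (p : Fin 6 → ℝ) :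
    V₃ v lam g p = fderiv ℝ g p
      (((Pi.single 2 1 : Fin 6 → ℝ) - lam • (Pi.single 5 1 : Fin 6 → ℝ))
        - (pd 5 v p / pd 3 v p) • ((Pi.single 0 1 : Fin 6 → ℝ) - lam • (Pi.single 3 1 : Fin 6 → ℝ))) := by
  simp only [V₃, pd, map_sub, map_smul, smul_eq_mul]

private lemma bracket {f : (Fin 6 → ℝ) → ℝ} (hf : ContDiff ℝ (⊤ : ℕ∞) f)
    {c d : (Fin 6 → ℝ) → (Fin 6 → ℝ)} {p : Fin 6 → ℝ}
    (hc : DifferentiableAt ℝ c p) (hd : DifferentiableAt ℝ d p) :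
    fderiv ℝ (fun q => fderiv ℝ f q (d q)) p (c p)
      - fderiv ℝ (fun q => fderiv ℝ f q (c q)) p (d p)
    = fderiv ℝ f p (fderiv ℝ d p (c p) - fderiv ℝ c p (d p)) := by
  have h2 : HasFDerivAt (fderiv ℝ f) (fderiv ℝ (fderiv ℝ f) p) p :=
    ((hf.fderiv_right (m := 1) (WithTop.coe_le_coe.mpr le_top)).differentiable one_ne_zero p).hasFDerivAt
  have Hd := h2.clm_apply hd.hasFDerivAt
  have Hc := h2.clm_apply hc.hasFDerivAt
  have sym := second_derivative_symmetric (fun y => ((hf.differentiable (by simp)) y).hasFDerivAt)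
    h2 (c p) (d p)
  rw [Hd.fderiv, Hc.fderiv, map_sub]
  simp only [ContinuousLinearMap.add_apply, ContinuousLinearMap.coe_comp',
    Function.comp_apply, ContinuousLinearMap.flip_apply]
  rw [sym]; ring
private lemma keyA (v : (Fin 6 → ℝ) → ℝ) (hv : ContDiff ℝ (⊤ : ℕ∞) v)
    (hvy₁ : ∀ p, pd 3 v p ≠ 0) (lam : ℝ) {f : (Fin 6 → ℝ) → ℝ} (hf : ContDiff ℝ (⊤ : ℕ∞) f)
    (p : Fin 6 → ℝ) :
    V₂ v lam (V₃ v lam f) p - V₃ v lam (V₂ v lam f) p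
      = (V₃ v lam (fun q => pd 4 v q / pd 3 v q) p
          - V₂ v lam (fun q => pd 5 v q / pd 3 v q) p)
        * (pd 0 f p - lam * pd 3 f p) := by
  set a : (Fin 6 → ℝ) → ℝ := fun q => pd 4 v q / pd 3 v q with ha_def
  set b : (Fin 6 → ℝ) → ℝ := fun q => pd 5 v q / pd 3 v q with hb_def
  have ha : ContDiff ℝ (⊤ : ℕ∞) a := (pd_smooth hv 4).div (pd_smooth hv 3) hvy₁
  have hb : ContDiff ℝ (⊤ : ℕ∞) b := (pd_smooth hv 5).div (pd_smooth hv 3) hvy₁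
  set u : Fin 6 → ℝ := (Pi.single 0 1 : Fin 6 → ℝ) - lam • (Pi.single 3 1 : Fin 6 → ℝ) with hu
  set c : (Fin 6 → ℝ) → (Fin 6 → ℝ) :=
    fun q => ((Pi.single 1 1 : Fin 6 → ℝ) - lam • (Pi.single 4 1 : Fin 6 → ℝ)) - a q • u with hc
  set d : (Fin 6 → ℝ) → (Fin 6 → ℝ) :=
    fun q => ((Pi.single 2 1 : Fin 6 → ℝ) - lam • (Pi.single 5 1 : Fin 6 → ℝ)) - b q • u with hd
  have hV₂ : ∀ g : (Fin 6 → ℝ) → ℝ, V₂ v lam g = fun q => fderiv ℝ g q (c q) :=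
    fun g => funext fun q => V₂_apply v lam g q
  have hV₃ : ∀ g : (Fin 6 → ℝ) → ℝ, V₃ v lam g = fun q => fderiv ℝ g q (d q) :=
    fun g => funext fun q => V₃_apply v lam g q
  have hcp : DifferentiableAt ℝ c p :=
    (differentiableAt_const _).sub ((ha.differentiable (by simp) p).smul_const u)
  have hdp : DifferentiableAt ℝ d p :=
    (differentiableAt_const _).sub ((hb.differentiable (by simp) p).smul_const u)
  have Hc : HasFDerivAt c (-(fderiv ℝ a p).smulRight u) p :=
    HasFDerivAt.const_sub (((ha.differentiable (by simp) p).hasFDerivAt).smul_const u) _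
  have Hd : HasFDerivAt d (-(fderiv ℝ b p).smulRight u) p :=
    HasFDerivAt.const_sub (((hb.differentiable (by simp) p).hasFDerivAt).smul_const u) _
  have e1 : V₂ v lam (V₃ v lam f) p = fderiv ℝ (fun q => fderiv ℝ f q (d q)) p (c p) := by
    rw [hV₂, hV₃ f]
  have e2 : V₃ v lam (V₂ v lam f) p = fderiv ℝ (fun q => fderiv ℝ f q (c q)) p (d p) := by
    rw [hV₃, hV₂ f]
  rw [e1, e2, bracket hf hcp hdp]
  have vd : fderiv ℝ d p (c p) = -(V₂ v lam b p) • u := by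
    rw [Hd.fderiv, hV₂ b]
    simp [ContinuousLinearMap.neg_apply, ContinuousLinearMap.smulRight_apply]
  have vc : fderiv ℝ c p (d p) = -(V₃ v lam a p) • u := by
    rw [Hc.fderiv, hV₃ a]
    simp [ContinuousLinearMap.neg_apply, ContinuousLinearMap.smulRight_apply]
  rw [vd, vc]
  have hsc : -(V₂ v lam b p) • u - -(V₃ v lam a p) • u
      = (V₃ v lam a p - V₂ v lam b p) • u := by
    rw [← sub_smul]; ring_nf
  rw [hsc, map_smul]
  have hu' : fderiv ℝ f p u = pd 0 f p - lam * pd 3 f p := by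
    simp only [hu, map_sub, map_smul, smul_eq_mul, pd]
  rw [hu', smul_eq_mul]

private lemma keyB (v : (Fin 6 → ℝ) → ℝ) (hv : ContDiff ℝ (⊤ : ℕ∞) v)
    (hvy₁ : ∀ p, pd 3 v p ≠ 0) (lam : ℝ) (p : Fin 6 → ℝ) :
    V₂ v lam (fun q => pd 5 v q / pd 3 v q) p - V₃ v lam (fun q => pd 4 v q / pd 3 v q) p
      = (pd 5 v p * (pd 0 (pd 4 v) p - pd 1 (pd 3 v) p)
        + pd 3 v p * (pd 1 (pd 5 v) p - pd 2 (pd 4 v) p)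
        + pd 4 v p * (pd 2 (pd 3 v) p - pd 0 (pd 5 v) p)) / (pd 3 v p) ^ 2 := by
  have hA : ∀ i : Fin 6, pd i (fun q => pd 4 v q / pd 3 v q) p
      = (pd i (pd 4 v) p - (pd 4 v p / pd 3 v p) * pd i (pd 3 v) p) / pd 3 v p :=
    fun i => pd_div i (pd_smooth hv 4) (pd_smooth hv 3) hvy₁ p
  have hB : ∀ i : Fin 6, pd i (fun q => pd 5 v q / pd 3 v q) p
      = (pd i (pd 5 v) p - (pd 5 v p / pd 3 v p) * pd i (pd 3 v) p) / pd 3 v p :=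
    fun i => pd_div i (pd_smooth hv 5) (pd_smooth hv 3) hvy₁ p
  simp only [V₂, V₃, hA, hB]
  rw [pd_comm hv 4 3 p, pd_comm hv 5 3 p, pd_comm hv 5 4 p]
  have h1 := hvy₁ p
  field_simp
  ring

theorem stmt8 (v : (Fin 6 → ℝ) → ℝ) (hv : ContDiff ℝ (⊤ : ℕ∞) v)
    (hvy₁ : ∀ p, pd 3 v p ≠ 0) :
    (∀ (lam : ℝ) (f : (Fin 6 → ℝ) → ℝ), ContDiff ℝ (⊤ : ℕ∞) f →
        ∀ p, V₂ v lam (V₃ v lam f) p = V₃ v lam (V₂ v lam f) p) ↔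
    (∀ p, pd 5 v p * (pd 0 (pd 4 v) p - pd 1 (pd 3 v) p)
        + pd 3 v p * (pd 1 (pd 5 v) p - pd 2 (pd 4 v) p)
        + pd 4 v p * (pd 2 (pd 3 v) p - pd 0 (pd 5 v) p) = 0) := by
  constructor
  · intro h p
    set f0 : (Fin 6 → ℝ) → ℝ := fun q => q 0 with hf0def
    have hf0 : ContDiff ℝ (⊤ : ℕ∞) f0 :=
      (ContinuousLinearMap.proj (R := ℝ) (φ := fun _ : Fin 6 => ℝ) 0).contDiff
    have hfd : fderiv ℝ f0 p = ContinuousLinearMap.proj (R := ℝ) (φ := fun _ : Fin 6 => ℝ) 0 :=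
      (ContinuousLinearMap.proj (R := ℝ) (φ := fun _ : Fin 6 => ℝ) 0).fderiv
    have e0 : pd 0 f0 p = 1 := by
      simp [pd, hfd]
    have e3 : pd 3 f0 p = 0 := by
      simp only [pd, hfd, ContinuousLinearMap.proj_apply]
      exact Pi.single_eq_of_ne (by decide) 1
    have hA := keyA v hv hvy₁ 0 hf0 p
    have hB := keyB v hv hvy₁ 0 p
    rw [sub_eq_zero.mpr (h 0 f0 hf0 p), e0, e3] at hA
    simp only [mul_zero, zero_mul, sub_zero, mul_one] at hA
    have hz : V₂ v 0 (fun q => pd 5 v q / pd 3 v q) p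
        - V₃ v 0 (fun q => pd 4 v q / pd 3 v q) p = 0 := by linarith
    rw [hz] at hB
    have := (div_eq_zero_iff.mp hB.symm).resolve_right (pow_ne_zero 2 (hvy₁ p))
    linarith
  · intro hE lam f hf p
    have hA := keyA v hv hvy₁ lam hf p
    have hB := keyB v hv hvy₁ lam p
    rw [hE p, zero_div] at hB
    have hz : V₃ v lam (fun q => pd 4 v q / pd 3 v q) p
        - V₂ v lam (fun q => pd 5 v q / pd 3 v q) p = 0 := by linarith
    rw [hz, zero_mul] at hA
    linarith
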